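/- There exists τ₀ > 0 such that ψ_τ(l) ≠ 0 for all τ ≥ τ₀, and χ_τ(l)/ψ_τ(l) − τ → 0 as τ → +∞. (Thus the two leading terms of the logarithmic derivative ψ_τ′(l)/ψ_τ(l), namely τ and the constant term 0, do not depend on the integrable potential q, and coincide with those for zero potential.) -/

import Mathlib

/-!
For `τ ≥ 2 ∫₀ˡ |q|` the weighted maximum `m = max_{[0,l]} e^{-τx} |ψ_τ(x)|` satisfies
`m ≤ 1/(2τ) + m/4`, whence `|ψ_τ(x)| ≤ e^{τx}/τ`. Fed back into the integral equation this gives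
`τ e^{-τl} ψ_τ(l) = e^{-τl} sinh(τl) + O(1/τ) → 1/2`. Since `cosh - sinh = exp ∘ neg`,
`χ_τ(l) - τ ψ_τ(l) = e^{-τl} + ∫₀ˡ e^{-τ(l-t)} q ψ_τ`, so `τ e^{-τl} |χ_τ(l) - τ ψ_τ(l)|` is at most
`τ e^{-2τl} + ∫₀ˡ e^{-2τ(l-t)} |q| → 0` by dominated convergence. The quotient of the two
weighted quantities is `χ_τ(l)/ψ_τ(l) - τ`.
-/

open Real MeasureTheory Filter intervalIntegral Set Topology

theorem abs_sinh_le_exp_div_two {y : ℝ} (hy : 0 ≤ y) : |sinh y| ≤ exp y / 2 := by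
  rw [abs_of_nonneg (sinh_nonneg_iff.2 hy), sinh_eq]
  linarith [exp_pos (-y)]

theorem abs_intervalIntegral_le_setIntegral_Icc {f g : ℝ → ℝ} {a b x : ℝ} (hx : x ∈ Icc a b)
    (hg : IntegrableOn g (Icc a b)) (hg0 : ∀ t, 0 ≤ g t) (hfg : ∀ t ∈ Ioc a x, |f t| ≤ g t) :
    |∫ t in a..x, f t| ≤ ∫ t in Icc a b, g t := by
  have hsub : Ioc a x ⊆ Icc a b := Ioc_subset_Icc_self.trans (Icc_subset_Icc_right hx.2)
  calc |∫ t in a..x, f t| = ‖∫ t in a..x, f t‖ := (norm_eq_abs _).symm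
    _ ≤ ∫ t in a..x, g t :=
        norm_integral_le_of_norm_le hx.1 (ae_of_all _ hfg)
          ((intervalIntegrable_iff_integrableOn_Ioc_of_le hx.1).2 (hg.mono_set hsub))
    _ ≤ ∫ t in Icc a b, g t := by
        rw [integral_of_le hx.1]
        exact setIntegral_mono_set hg (ae_of_all _ hg0) hsub.eventuallyLE

theorem tendsto_setIntegral_exp_neg_mul_sub_mul {g : ℝ → ℝ} {a b : ℝ}
    (hg : IntegrableOn g (Icc a b)) :
    Tendsto (fun τ => ∫ t in Icc a b, exp (-(τ * (b - t))) * g t) atTop (𝓝 0) := by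
  have hbound : ∀ᶠ τ in atTop, ∀ᵐ t ∂volume.restrict (Icc a b),
      ‖exp (-(τ * (b - t))) * g t‖ ≤ |g t| := by
    filter_upwards [eventually_ge_atTop 0] with τ hτ
    filter_upwards [ae_restrict_mem measurableSet_Icc] with t ht
    rw [norm_mul, norm_of_nonneg (exp_pos _).le, Real.norm_eq_abs]
    exact mul_le_of_le_one_left (abs_nonneg _)
      (exp_le_one_iff.2 (neg_nonpos.2 (mul_nonneg hτ (sub_nonneg.2 ht.2))))
  have hlim : ∀ᵐ t ∂volume.restrict (Icc a b),
      Tendsto (fun τ => exp (-(τ * (b - t))) * g t) atTop (𝓝 0) := by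
    filter_upwards [ae_restrict_mem measurableSet_Icc, ae_restrict_of_ae (volume.ae_ne b)]
      with t ht htb
    have hbt : 0 < b - t := sub_pos.2 (lt_of_le_of_ne ht.2 htb)
    simpa using (tendsto_exp_comp_nhds_zero.2
      (tendsto_neg_atTop_atBot.comp (tendsto_id.atTop_mul_const hbt))).mul_const (g t)
  simpa using tendsto_integral_filter_of_dominated_convergence (fun t => |g t|)
    (Eventually.of_forall fun τ => (by fun_prop : Continuous _).aestronglyMeasurable.mul hg.1)
    hbound hg.abs hlim

def IsSinhVolterraSolution (l τ : ℝ) (q f : ℝ → ℝ) : Prop :=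
  ∀ x ∈ Icc 0 l,
    f x = sinh (τ * x) / τ + (1 / τ) * ∫ t in (0:ℝ)..x, sinh (τ * (x - t)) * q t * f t

theorem intervalIntegrable_mul_mul_of_integrableOn {l : ℝ} {k q f : ℝ → ℝ} (hl : 0 ≤ l)
    (hk : Continuous k) (hq : IntegrableOn q (Icc 0 l)) (hf : ContinuousOn f (Icc 0 l)) :
    IntervalIntegrable (fun t => k t * q t * f t) volume 0 l := by
  rw [intervalIntegrable_iff_integrableOn_Icc_of_le hl]
  exact (hq.continuousOn_mul (hk.continuousOn.mul hf) isCompact_Icc).congr_fun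
    (fun t _ => mul_right_comm _ _ _) measurableSet_Icc

section SinhKernel

variable {l τ C : ℝ} {q f : ℝ → ℝ}

theorem abs_integral_sinh_kernel_le {x : ℝ} (hq : IntegrableOn q (Icc 0 l)) (hx : x ∈ Icc 0 l)
    (hτ : 0 ≤ τ) (hC : 0 ≤ C) (hf : ∀ t ∈ Icc 0 l, |f t| ≤ C * exp (τ * t)) :
    |∫ t in (0:ℝ)..x, sinh (τ * (x - t)) * q t * f t|
      ≤ C * exp (τ * x) / 2 * ∫ t in Icc 0 l, |q t| := by
  rw [← MeasureTheory.integral_const_mul]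
  refine abs_intervalIntegral_le_setIntegral_Icc hx (hq.abs.const_mul _) (fun t => by positivity)
    fun t ht => ?_
  have hexp : exp (τ * (x - t)) * exp (τ * t) = exp (τ * x) := by rw [← exp_add]; ring_nf
  calc |sinh (τ * (x - t)) * q t * f t| = |sinh (τ * (x - t))| * |q t| * |f t| := by
        rw [abs_mul, abs_mul]
    _ ≤ exp (τ * (x - t)) / 2 * |q t| * (C * exp (τ * t)) := by
        gcongr
        · exact abs_sinh_le_exp_div_two (mul_nonneg hτ (sub_nonneg.2 ht.2))
        · exact hf t ⟨ht.1.le, ht.2.trans hx.2⟩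
    _ = C * exp (τ * x) / 2 * |q t| := by linear_combination (C / 2 * |q t|) * hexp

namespace IsSinhVolterraSolution

theorem abs_le (hf : IsSinhVolterraSolution l τ q f) (hl : 0 ≤ l)
    (hq : IntegrableOn q (Icc 0 l)) (hτ : 0 < τ) (hτQ : 2 * ∫ t in Icc 0 l, |q t| ≤ τ)
    (hfc : ContinuousOn f (Icc 0 l)) (x : ℝ) (hx : x ∈ Icc 0 l) : |f x| ≤ τ⁻¹ * exp (τ * x) := by
  obtain ⟨x₀, hx₀, hmax⟩ := isCompact_Icc.exists_isMaxOn (nonempty_Icc.2 hl)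
    (((continuous_exp.comp (continuous_const.mul continuous_id).neg).continuousOn).mul hfc.abs)
  set m := exp (-(τ * x₀)) * |f x₀|
  have hm : ∀ t ∈ Icc 0 l, |f t| ≤ m * exp (τ * t) := fun t ht => by
    have : exp (-(τ * t)) * |f t| ≤ m := hmax ht
    rwa [exp_neg, inv_mul_le_iff₀ (exp_pos _), mul_comm] at this
  have hm0 : 0 ≤ m := by positivity
  have hkernel := abs_integral_sinh_kernel_le hq hx₀ hτ.le hm0 hm
  have hmE : m * exp (τ * x₀) = |f x₀| := by
    rw [mul_comm, ← mul_assoc, ← exp_add, add_neg_cancel, exp_zero, one_mul]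
  have hbound : m * exp (τ * x₀) ≤ (τ⁻¹ / 2 + m / 4) * exp (τ * x₀) := by
    calc m * exp (τ * x₀) = |sinh (τ * x₀) / τ + (1 / τ) *
          ∫ t in (0:ℝ)..x₀, sinh (τ * (x₀ - t)) * q t * f t| := by rw [hmE, ← hf x₀ hx₀]
      _ ≤ |sinh (τ * x₀)| * τ⁻¹ + τ⁻¹ * (m * exp (τ * x₀) / 2 * ∫ t in Icc 0 l, |q t|) := by
        refine (abs_add_le _ _).trans ?_
        rw [abs_div, abs_mul, abs_of_pos hτ, abs_of_pos (one_div_pos.2 hτ), one_div, div_eq_mul_inv]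
        gcongr
      _ ≤ exp (τ * x₀) / 2 * τ⁻¹ + τ⁻¹ * (m * exp (τ * x₀) / 2 * (τ / 2)) := by
        gcongr
        · exact abs_sinh_le_exp_div_two (mul_nonneg hτ.le hx₀.1)
        · linarith
      _ = (τ⁻¹ / 2 + m / 4) * exp (τ * x₀) := by field_simp; ring
  have hmτ : m ≤ τ⁻¹ := by
    have := le_of_mul_le_mul_right hbound (exp_pos _)
    linarith [inv_pos.2 hτ]
  calc |f x| ≤ m * exp (τ * x) := hm x hx
    _ ≤ τ⁻¹ * exp (τ * x) := by gcongr

theorem abs_mul_exp_neg_mul_sub_le (hf : IsSinhVolterraSolution l τ q f) (hl : 0 ≤ l)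
    (hq : IntegrableOn q (Icc 0 l)) (hτ : 0 < τ) (hτQ : 2 * ∫ t in Icc 0 l, |q t| ≤ τ)
    (hfc : ContinuousOn f (Icc 0 l)) :
    |τ * exp (-(τ * l)) * f l - exp (-(τ * l)) * sinh (τ * l)|
      ≤ (2 * τ)⁻¹ * ∫ t in Icc 0 l, |q t| := by
  have hlmem : l ∈ Icc 0 l := ⟨hl, le_rfl⟩
  have hkernel := abs_integral_sinh_kernel_le hq hlmem hτ.le (inv_nonneg.2 hτ.le)
    (hf.abs_le hl hq hτ hτQ hfc)
  have hremainder : τ * exp (-(τ * l)) * f l - exp (-(τ * l)) * sinh (τ * l)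
      = exp (-(τ * l)) * ∫ t in (0:ℝ)..l, sinh (τ * (l - t)) * q t * f t := by
    rw [hf l hlmem]
    field_simp
    ring
  calc |τ * exp (-(τ * l)) * f l - exp (-(τ * l)) * sinh (τ * l)|
      = exp (-(τ * l)) * |∫ t in (0:ℝ)..l, sinh (τ * (l - t)) * q t * f t| := by
        rw [hremainder, abs_mul, abs_of_pos (exp_pos _)]
    _ ≤ exp (-(τ * l)) * (τ⁻¹ * exp (τ * l) / 2 * ∫ t in Icc 0 l, |q t|) := by gcongr
    _ = (2 * τ)⁻¹ * ∫ t in Icc 0 l, |q t| := by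
        rw [exp_neg]
        field_simp

theorem abs_mul_exp_neg_mul_cosh_add_integral_sub_le (hf : IsSinhVolterraSolution l τ q f)
    (hl : 0 ≤ l) (hq : IntegrableOn q (Icc 0 l)) (hτ : 0 < τ) (hτQ : 2 * ∫ t in Icc 0 l, |q t| ≤ τ)
    (hfc : ContinuousOn f (Icc 0 l)) :
    |τ * exp (-(τ * l)) *
        (cosh (τ * l) + (∫ t in (0:ℝ)..l, cosh (τ * (l - t)) * q t * f t) - τ * f l)|
      ≤ τ * exp (-(2 * l) * τ) + ∫ t in Icc 0 l, exp (-(2 * τ * (l - t))) * |q t| := by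
  have hlmem : l ∈ Icc 0 l := ⟨hl, le_rfl⟩
  have hdefect : cosh (τ * l) + (∫ t in (0:ℝ)..l, cosh (τ * (l - t)) * q t * f t) - τ * f l
      = exp (-(τ * l)) + ∫ t in (0:ℝ)..l, exp (-(τ * (l - t))) * q t * f t := by
    have hsub := integral_sub
      (intervalIntegrable_mul_mul_of_integrableOn (k := fun t => cosh (τ * (l - t))) hl
        (by fun_prop) hq hfc)
      (intervalIntegrable_mul_mul_of_integrableOn (k := fun t => sinh (τ * (l - t))) hl
        (by fun_prop) hq hfc)
    simp only [← sub_mul, cosh_sub_sinh] at hsub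
    rw [hf l hlmem, hsub, ← cosh_sub_sinh]
    field_simp
    ring
  have hkernel : |∫ t in (0:ℝ)..l, exp (-(τ * (l - t))) * q t * f t|
      ≤ τ⁻¹ * exp (τ * l) * ∫ t in Icc 0 l, exp (-(2 * τ * (l - t))) * |q t| := by
    rw [← MeasureTheory.integral_const_mul]
    refine abs_intervalIntegral_le_setIntegral_Icc hlmem
      ((IntegrableOn.continuousOn_mul (by fun_prop) hq.abs isCompact_Icc).const_mul _)
      (fun t => by positivity) fun t ht => ?_
    have hexp : exp (-(τ * (l - t))) * exp (τ * t) = exp (τ * l) * exp (-(2 * τ * (l - t))) := by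
      rw [← exp_add, ← exp_add]; ring_nf
    calc |exp (-(τ * (l - t))) * q t * f t| = exp (-(τ * (l - t))) * |q t| * |f t| := by
          rw [abs_mul, abs_mul, abs_of_pos (exp_pos _)]
      _ ≤ exp (-(τ * (l - t))) * |q t| * (τ⁻¹ * exp (τ * t)) := by
          gcongr
          exact hf.abs_le hl hq hτ hτQ hfc t ⟨ht.1.le, ht.2⟩
      _ = τ⁻¹ * exp (τ * l) * (exp (-(2 * τ * (l - t))) * |q t|) := by
          linear_combination (τ⁻¹ * |q t|) * hexp
  rw [hdefect, abs_mul, abs_of_pos (by positivity)]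
  calc τ * exp (-(τ * l)) * |exp (-(τ * l)) + ∫ t in (0:ℝ)..l, exp (-(τ * (l - t))) * q t * f t|
      ≤ τ * exp (-(τ * l)) * (exp (-(τ * l)) + τ⁻¹ * exp (τ * l) *
          ∫ t in Icc 0 l, exp (-(2 * τ * (l - t))) * |q t|) := by
        gcongr
        exact (abs_add_le _ _).trans (by rw [abs_of_pos (exp_pos _)]; gcongr)
    _ = τ * exp (-(2 * l) * τ) + ∫ t in Icc 0 l, exp (-(2 * τ * (l - t))) * |q t| := by
        have hinv : exp (-(τ * l)) * exp (τ * l) = 1 := by rw [← exp_add]; simp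
        rw [show -(2 * l) * τ = -(τ * l) + -(τ * l) by ring, exp_add]
        linear_combination (∫ t in Icc 0 l, exp (-(2 * τ * (l - t))) * |q t|) *
          (exp (-(τ * l)) * exp (τ * l) * mul_inv_cancel₀ hτ.ne' + hinv)

end IsSinhVolterraSolution
end SinhKernel

theorem tendsto_exp_neg_mul_sinh_atTop :
    Tendsto (fun y => exp (-y) * sinh y) atTop (𝓝 (1 / 2)) := by
  have h := ((tendsto_exp_neg_atTop_nhds_zero.mul tendsto_exp_neg_atTop_nhds_zero).const_sub 1
    |>.div_const 2)
  rw [mul_zero, sub_zero] at h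
  refine h.congr fun y => ?_
  rw [sinh_eq, exp_neg]
  field_simp

section Family

variable {l : ℝ} {q : ℝ → ℝ} {ψ : ℝ → ℝ → ℝ}

theorem tendsto_mul_exp_neg_mul_of_isSinhVolterraSolution (hl : 0 < l)
    (hq : IntegrableOn q (Icc 0 l)) (hψc : ∀ τ > 0, ContinuousOn (ψ τ) (Icc 0 l))
    (hψ : ∀ τ > 0, IsSinhVolterraSolution l τ q (ψ τ)) :
    Tendsto (fun τ => τ * exp (-(τ * l)) * ψ τ l) atTop (𝓝 (1 / 2)) := by
  refine (tendsto_exp_neg_mul_sinh_atTop.comp (tendsto_id.atTop_mul_const hl)).congr_dist ?_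
  have hbound := (tendsto_inv_atTop_zero.comp (tendsto_id.const_mul_atTop two_pos)).mul_const
    (∫ t in Icc 0 l, |q t|)
  rw [zero_mul] at hbound
  refine squeeze_zero' (Eventually.of_forall fun _ => dist_nonneg) ?_ hbound
  filter_upwards [eventually_gt_atTop 0, eventually_ge_atTop (2 * ∫ t in Icc 0 l, |q t|)]
    with τ hτ hτQ
  rw [dist_comm, Real.dist_eq]
  exact (hψ τ hτ).abs_mul_exp_neg_mul_sub_le hl.le hq hτ hτQ (hψc τ hτ)

theorem tendsto_mul_exp_neg_mul_sub_of_isSinhVolterraSolution {χ : ℝ → ℝ → ℝ} (hl : 0 < l)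
    (hq : IntegrableOn q (Icc 0 l)) (hψc : ∀ τ > 0, ContinuousOn (ψ τ) (Icc 0 l))
    (hψ : ∀ τ > 0, IsSinhVolterraSolution l τ q (ψ τ))
    (hχ : ∀ τ > 0, χ τ l = cosh (τ * l) + ∫ t in (0:ℝ)..l, cosh (τ * (l - t)) * q t * ψ τ t) :
    Tendsto (fun τ => τ * exp (-(τ * l)) * (χ τ l - τ * ψ τ l)) atTop (𝓝 0) := by
  have hexp := tendsto_rpow_mul_exp_neg_mul_atTop_nhds_zero 1 (2 * l) (by positivity)
  simp only [rpow_one] at hexp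
  have hint := (tendsto_setIntegral_exp_neg_mul_sub_mul hq.abs).comp
    (tendsto_id.const_mul_atTop two_pos)
  have hbound : Tendsto (fun τ => τ * exp (-(2 * l) * τ) +
      ∫ t in Icc 0 l, exp (-(2 * τ * (l - t))) * |q t|) atTop (𝓝 0) := by
    have hsum := hexp.add hint
    rw [add_zero] at hsum
    exact hsum
  refine squeeze_zero_norm' ?_ hbound
  filter_upwards [eventually_gt_atTop 0, eventually_ge_atTop (2 * ∫ t in Icc 0 l, |q t|)]
    with τ hτ hτQ
  rw [Real.norm_eq_abs, hχ τ hτ]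
  exact (hψ τ hτ).abs_mul_exp_neg_mul_cosh_add_integral_sub_le hl.le hq hτ hτQ (hψc τ hτ)

end Family

/-- For large `τ`, `ψ_τ(l) ≠ 0` and the logarithmic derivative
satisfies `χ_τ(l)/ψ_τ(l) = τ + o(1)` as `τ → +∞`; in particular the two leading
terms do not depend on the integrable potential `q`. -/
theorem log_derivative_asymptotics (l : ℝ) (hl : 0 < l) (q : ℝ → ℝ)
    (hq : IntegrableOn q (Set.Icc 0 l)) (ψ χ : ℝ → ℝ → ℝ)
    (hψcont : ∀ τ > (0:ℝ), ContinuousOn (ψ τ) (Set.Icc 0 l))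
    (hψ : ∀ τ > (0:ℝ), ∀ x ∈ Set.Icc 0 l,
      ψ τ x = Real.sinh (τ * x) / τ +
        (1 / τ) * ∫ t in (0:ℝ)..x, Real.sinh (τ * (x - t)) * q t * ψ τ t)
    (hχ : ∀ τ > (0:ℝ), ∀ x ∈ Set.Icc 0 l,
      χ τ x = Real.cosh (τ * x) +
        ∫ t in (0:ℝ)..x, Real.cosh (τ * (x - t)) * q t * ψ τ t) :
    (∃ τ₀ > (0:ℝ), ∀ τ ≥ τ₀, ψ τ l ≠ 0) ∧
      Tendsto (fun τ : ℝ => χ τ l / ψ τ l - τ) atTop (nhds 0) := by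
  have hA := tendsto_mul_exp_neg_mul_of_isSinhVolterraSolution hl hq hψcont hψ
  have hB := tendsto_mul_exp_neg_mul_sub_of_isSinhVolterraSolution hl hq hψcont hψ
    fun τ hτ => hχ τ hτ l ⟨hl.le, le_rfl⟩
  have hpos : ∀ᶠ τ in atTop, 0 < τ * exp (-(τ * l)) * ψ τ l :=
    hA.eventually (eventually_gt_nhds one_half_pos)
  refine ⟨?_, ?_⟩
  · obtain ⟨τ₀, hτ₀⟩ := eventually_atTop.1 hpos
    exact ⟨max τ₀ 1, by positivity,
      fun τ hτ => right_ne_zero_of_mul (hτ₀ τ (le_of_max_le_left hτ)).ne'⟩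
  · have hquot := hB.div hA one_half_pos.ne'
    rw [zero_div] at hquot
    refine hquot.congr' ?_
    filter_upwards [hpos] with τ h
    have hψl : ψ τ l ≠ 0 := right_ne_zero_of_mul h.ne'
    have hw : τ * exp (-(τ * l)) ≠ 0 := left_ne_zero_of_mul h.ne'
    rw [Pi.div_apply, mul_div_mul_left _ _ hw, sub_div, mul_div_cancel_right₀ _ hψl]
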